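/- For the (r × r)-dimensional torus C_r □ C_r with r odd, the isometric path cover number and the isometric path partition number are each equal to r or r + 1. -/

import Mathlib

open SimpleGraph

/-- `s` is the vertex set of an isometric (shortest) path in `G`. -/
def IsIsoPathSet {V : Type*} (G : SimpleGraph V) (s : Set V) : Prop :=
  ∃ (u v : V) (p : G.Walk u v), p.IsPath ∧ p.length = G.dist u v ∧ s = {x | x ∈ p.support}

/-- The isometric path cover number. -/
noncomputable def ipCover {V : Type*} (G : SimpleGraph V) : ℕ :=
  sInf {n | ∃ f : Fin n → Set V, (∀ i, IsIsoPathSet G (f i)) ∧ (⋃ i, f i) = Set.univ}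

/-- The isometric path partition number. -/
noncomputable def ipPartition {V : Type*} (G : SimpleGraph V) : ℕ :=
  sInf {n | ∃ f : Fin n → Set V, (∀ i, IsIsoPathSet G (f i)) ∧ (⋃ i, f i) = Set.univ ∧
    Pairwise (Function.onFun Disjoint f)}

/-!
For `r = 2m + 1` the distance in `C_r` is at most `m`, so the torus `C_r □ C_r` has diameter
`2m` and an isometric path has at most `2m + 1 = r` vertices: covering all `r²` vertices takes
at least `r` of them. Conversely, the `r` staircases that start at the antidiagonal points
`(k, -k)` and step alternately in the first and the second coordinate for `2m` steps end at
`(k + m, -k + m)`, at distance `m + m`, so they are isometric; they partition the vertex set,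
since the `i`-th vertex of each staircase lies on the antidiagonal `x + y = i`.
-/

section IsometricPaths

variable {V : Type*} {G : SimpleGraph V}

lemma isIsoPathSet_singleton (v : V) : IsIsoPathSet G {v} :=
  ⟨v, v, .nil, Walk.IsPath.nil, by simp, by ext; simp⟩

lemma IsIsoPathSet.ncard_le {s : Set V} (hs : IsIsoPathSet G s) {d : ℕ}
    (hd : ∀ u v, G.dist u v ≤ d) : s.ncard ≤ d + 1 := by
  classical
  obtain ⟨u, v, p, -, hlen, rfl⟩ := hs
  calc {x | x ∈ p.support}.ncard = p.support.toFinset.card := by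
        rw [← Set.ncard_coe_finset]; congr 1; ext; simp
    _ ≤ p.support.length := p.support.toFinset_card_le
    _ = G.dist u v + 1 := by rw [Walk.length_support, hlen]
    _ ≤ d + 1 := Nat.add_le_add_right (hd u v) 1

lemma exists_isIsoPathSet_partition [Finite V] :
    ∃ n, ∃ f : Fin n → Set V, (∀ i, IsIsoPathSet G (f i)) ∧ (⋃ i, f i) = Set.univ ∧
      Pairwise (Function.onFun Disjoint f) := by
  obtain ⟨n, ⟨e⟩⟩ := Finite.exists_equiv_fin V
  refine ⟨n, fun i => {e.symm i}, fun i => isIsoPathSet_singleton _, ?_, ?_⟩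
  · exact Set.eq_univ_of_forall fun v => Set.mem_iUnion.2 ⟨e v, by simp⟩
  · intro i j hij
    simpa [Function.onFun] using e.symm.injective.ne hij

lemma ipPartition_le {n : ℕ} {f : Fin n → Set V} (hf : ∀ i, IsIsoPathSet G (f i))
    (hcover : (⋃ i, f i) = Set.univ) (hdisj : Pairwise (Function.onFun Disjoint f)) :
    ipPartition G ≤ n :=
  Nat.sInf_le ⟨f, hf, hcover, hdisj⟩

lemma ipCover_le_ipPartition [Finite V] : ipCover G ≤ ipPartition G := by
  obtain ⟨f, hf, hcover, -⟩ := Nat.sInf_mem (exists_isIsoPathSet_partition (G := G))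
  exact Nat.sInf_le ⟨f, hf, hcover⟩

lemma card_le_ipCover_mul [Finite V] {d : ℕ} (hd : ∀ u v, G.dist u v ≤ d) :
    Nat.card V ≤ ipCover G * (d + 1) := by
  have hne : {n | ∃ f : Fin n → Set V, (∀ i, IsIsoPathSet G (f i)) ∧
      (⋃ i, f i) = Set.univ}.Nonempty := by
    obtain ⟨n, f, hf, hcover, -⟩ := exists_isIsoPathSet_partition (G := G)
    exact ⟨n, f, hf, hcover⟩
  obtain ⟨f, hf, hcover⟩ := Nat.sInf_mem hne
  calc Nat.card V = (⋃ i ∈ Finset.univ, f i).ncard := by simp [hcover, Set.ncard_univ]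
    _ ≤ ∑ i, (f i).ncard := Finset.set_ncard_biUnion_le _ _
    _ ≤ ∑ _i : Fin (ipCover G), (d + 1) := Finset.sum_le_sum fun i _ => (hf i).ncard_le hd
    _ = ipCover G * (d + 1) := by simp

end IsometricPaths

open Fin.NatCast Fin.CommRing

namespace SimpleGraph

lemma dist_boxProd {α β : Type*} {G : SimpleGraph α} {H : SimpleGraph β} (hG : G.Preconnected)
    (hH : H.Preconnected) (x y : α × β) :
    (G □ H).dist x y = G.dist x.1 y.1 + H.dist x.2 y.2 := by
  have hGH : (G □ H).Reachable x y := reachable_boxProd.2 ⟨hG _ _, hH _ _⟩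
  apply Nat.cast_injective (R := ℕ∞)
  rw [Nat.cast_add, hGH.coe_dist_eq_edist, (hG _ _).coe_dist_eq_edist,
    (hH _ _).coe_dist_eq_edist, edist_boxProd]

lemma exists_walk_support_eq_map {V : Type*} {G : SimpleGraph V} (g : ℕ → V) (k : ℕ)
    (h : ∀ i < k, G.Adj (g i) (g (i + 1))) :
    ∃ p : G.Walk (g 0) (g k), p.length = k ∧ p.support = (List.range (k + 1)).map g := by
  induction k with
  | zero => exact ⟨.nil, rfl, by simp⟩
  | succ k ih =>
    obtain ⟨p, hlen, hsupp⟩ := ih fun i hi => h i (by omega)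
    refine ⟨p.concat (h k k.lt_succ_self), by simp [hlen], ?_⟩
    rw [Walk.support_concat, hsupp, List.range_succ (n := k + 1), List.map_append]
    rfl

variable {n : ℕ}

lemma cycleGraph_adj_add_one [NeZero n] (hn : 1 < n) (a : Fin n) :
    (cycleGraph n).Adj a (a + 1) := by
  rw [cycleGraph_adj', add_sub_cancel_left, Fin.val_one', Nat.mod_eq_of_lt hn]
  exact Or.inr rfl

lemma cycleGraph_dist_add_natCast_le [NeZero n] (a : Fin n) (k : ℕ) :
    (cycleGraph n).dist a (a + k) ≤ k := by
  induction k with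
  | zero => simp
  | succ k ih =>
    have hstep : (cycleGraph n).dist (a + k) (a + (k + 1 : ℕ)) ≤ 1 := by
      rw [Nat.cast_succ, ← add_assoc]
      rcases (show n = 1 ∨ 1 < n by have := NeZero.pos n; omega) with rfl | hn
      · simp
      · exact (dist_eq_one_iff_adj.2 (cycleGraph_adj_add_one hn _)).le
    calc (cycleGraph n).dist a (a + (k + 1 : ℕ))
        ≤ (cycleGraph n).dist a (a + k) + (cycleGraph n).dist (a + k) (a + (k + 1 : ℕ)) :=
          (cycleGraph_preconnected _ _).dist_triangle_left _
      _ ≤ k + 1 := add_le_add ih hstep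

lemma cycleGraph_exists_intCast_eq_sub [NeZero n] {a b : Fin n} (p : (cycleGraph n).Walk a b) :
    ∃ s : ℤ, s.natAbs ≤ p.length ∧ (s : Fin n) = b - a := by
  induction p with
  | nil => exact ⟨0, by simp, by simp⟩
  | @cons u w v h p ih =>
    obtain ⟨s, hs, hsv⟩ := ih
    have hstep : ∃ e : ℤ, e.natAbs = 1 ∧ (e : Fin n) = w - u := by
      rcases cycleGraph_adj'.1 h with hd | hd
      · refine ⟨-1, rfl, ?_⟩
        rw [Int.cast_neg, Int.cast_one, ← Nat.cast_one, ← hd, Fin.cast_val_eq_self]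
        ring
      · refine ⟨1, rfl, ?_⟩
        rw [Int.cast_one, ← Nat.cast_one, ← hd, Fin.cast_val_eq_self]
    obtain ⟨e, he, hew⟩ := hstep
    refine ⟨s + e, ?_, ?_⟩
    · have := Int.natAbs_add_le s e
      rw [Walk.length_cons]
      omega
    · rw [Int.cast_add, hsv, hew]
      ring

theorem cycleGraph_dist [NeZero n] (a b : Fin n) :
    (cycleGraph n).dist a b = min (b - a).val (a - b).val := by
  refine le_antisymm (le_min ?_ ?_) ?_
  · simpa using cycleGraph_dist_add_natCast_le a (b - a).val
  · rw [dist_comm]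
    simpa using cycleGraph_dist_add_natCast_le b (a - b).val
  · obtain ⟨p, hp⟩ := (cycleGraph_preconnected a b).exists_walk_length_eq_dist
    obtain ⟨s, hs, hsab⟩ := cycleGraph_exists_intCast_eq_sub p
    rw [← hp]
    obtain ⟨k, rfl | rfl⟩ := Int.eq_nat_or_neg s
    · refine min_le_of_left_le (le_trans ?_ hs)
      rw [← hsab, Int.cast_natCast, Fin.val_natCast]
      simpa using Nat.mod_le k n
    · refine min_le_of_right_le (le_trans ?_ hs)
      rw [← neg_sub, ← hsab, Int.cast_neg, Int.cast_natCast, neg_neg, Fin.val_natCast]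
      simpa using Nat.mod_le k n

variable {m : ℕ}

lemma cycleGraph_two_mul_add_one_dist_le (a b : Fin (2 * m + 1)) :
    (cycleGraph (2 * m + 1)).dist a b ≤ m := by
  rw [cycleGraph_dist, ← neg_sub b a, Fin.val_neg']
  have := (b - a).isLt
  have := Nat.mod_le (2 * m + 1 - (b - a).val) (2 * m + 1)
  omega

lemma cycleGraph_two_mul_add_one_dist_add (a : Fin (2 * m + 1)) :
    (cycleGraph (2 * m + 1)).dist a (a + m) = m := by
  rw [cycleGraph_dist, add_sub_cancel_left, sub_add_cancel_left, Fin.val_neg', Fin.val_natCast,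
    Nat.mod_eq_of_lt (by omega : m < 2 * m + 1)]
  rcases Nat.eq_zero_or_pos m with rfl | hm
  · simp
  · rw [show 2 * m + 1 - m = m + 1 by omega, Nat.mod_eq_of_lt (by omega : m + 1 < 2 * m + 1)]
    omega

end SimpleGraph

section Staircase

variable {n : ℕ} [NeZero n]

def staircase (k : Fin n) (i : ℕ) : Fin n × Fin n :=
  (k + ((i + 1) / 2 : ℕ), -k + (i / 2 : ℕ))

lemma staircase_fst_add_snd (k : Fin n) (i : ℕ) :
    (staircase k i).1 + (staircase k i).2 = i := by
  have hi : (i + 1) / 2 + i / 2 = i := by omega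
  calc (staircase k i).1 + (staircase k i).2 = (((i + 1) / 2 + i / 2 : ℕ) : Fin n) := by
        simp only [staircase]; push_cast; ring
    _ = i := by rw [hi]

lemma staircase_injective :
    Function.Injective fun p : Fin n × Fin n => staircase p.1 p.2 := by
  rintro ⟨k, i⟩ ⟨k', i'⟩ h
  have hi : i = i' := by
    have hsum := congrArg (fun x : Fin n × Fin n => x.1 + x.2) h
    simpa only [staircase_fst_add_snd, Fin.cast_val_eq_self] using hsum
  subst hi
  simpa [staircase] using congrArg Prod.fst h

lemma staircase_adj (hn : 1 < n) (k : Fin n) (i : ℕ) :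
    (cycleGraph n □ cycleGraph n).Adj (staircase k i) (staircase k (i + 1)) := by
  rcases Nat.even_or_odd' i with ⟨j, rfl | rfl⟩
  · rw [staircase, staircase, show (2 * j + 1) / 2 = j by omega,
      show (2 * j + 1 + 1) / 2 = j + 1 by omega, show 2 * j / 2 = j by omega]
    exact boxProd_adj_left.2 (by simpa [add_assoc] using cycleGraph_adj_add_one hn (k + j))
  · rw [staircase, staircase, show (2 * j + 1 + 1) / 2 = j + 1 by omega,
      show (2 * j + 1 + 1 + 1) / 2 = j + 1 by omega, show (2 * j + 1) / 2 = j by omega]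
    exact boxProd_adj_right.2 (by simpa [add_assoc] using cycleGraph_adj_add_one hn (-k + j))

end Staircase

section OddTorus

variable {m : ℕ}

lemma torus_dist_le (u v : Fin (2 * m + 1) × Fin (2 * m + 1)) :
    (cycleGraph (2 * m + 1) □ cycleGraph (2 * m + 1)).dist u v ≤ 2 * m := by
  rw [dist_boxProd cycleGraph_preconnected cycleGraph_preconnected]
  have h₁ := cycleGraph_two_mul_add_one_dist_le u.1 v.1
  have h₂ := cycleGraph_two_mul_add_one_dist_le u.2 v.2
  omega

lemma isIsoPathSet_range_staircase (k : Fin (2 * m + 1)) :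
    IsIsoPathSet (cycleGraph (2 * m + 1) □ cycleGraph (2 * m + 1))
      (Set.range fun i : Fin (2 * m + 1) => staircase k i) := by
  obtain ⟨p, hlen, hsupp⟩ := exists_walk_support_eq_map (staircase k) (2 * m)
    fun i hi => staircase_adj (by omega) k i
  have hdist : (cycleGraph (2 * m + 1) □ cycleGraph (2 * m + 1)).dist
      (staircase k 0) (staircase k (2 * m)) = 2 * m := by
    rw [dist_boxProd cycleGraph_preconnected cycleGraph_preconnected, staircase, staircase,
      show (2 * m + 1) / 2 = m by omega, show 2 * m / 2 = m by omega]
    simp only [zero_add, Nat.reduceDiv, Nat.cast_zero, add_zero,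
      cycleGraph_two_mul_add_one_dist_add]
    ring
  have hgeodesic : p.length = _ := hlen.trans hdist.symm
  refine ⟨_, _, p, p.isPath_of_length_eq_dist hgeodesic, hgeodesic, ?_⟩
  ext x
  simp [hsupp, Fin.exists_iff]

lemma ipPartition_torus_le :
    ipPartition (cycleGraph (2 * m + 1) □ cycleGraph (2 * m + 1)) ≤ 2 * m + 1 := by
  refine ipPartition_le (f := fun k => Set.range fun i : Fin (2 * m + 1) => staircase k i)
    isIsoPathSet_range_staircase ?_ ?_
  · refine Set.eq_univ_of_forall fun x => ?_
    obtain ⟨⟨k, i⟩, hki⟩ := Finite.injective_iff_surjective.1 staircase_injective x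
    exact Set.mem_iUnion.2 ⟨k, i, hki⟩
  · rintro k k' hkk'
    refine Set.disjoint_left.2 ?_
    rintro _ ⟨i, rfl⟩ ⟨i', hi'⟩
    have hki := staircase_injective (a₁ := (k', i')) (a₂ := (k, i)) hi'
    exact hkk' (congrArg Prod.fst hki).symm

end OddTorus

theorem stmt_14_general (r : ℕ) (hodd : Odd r) :
    r ≤ ipCover (cycleGraph r □ cycleGraph r) ∧
      ipCover (cycleGraph r □ cycleGraph r) ≤ ipPartition (cycleGraph r □ cycleGraph r) ∧
      ipPartition (cycleGraph r □ cycleGraph r) ≤ r + 1 := by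
  obtain ⟨m, rfl⟩ := hodd
  refine ⟨?_, ipCover_le_ipPartition, ipPartition_torus_le.trans (Nat.le_succ _)⟩
  have hcard := card_le_ipCover_mul (torus_dist_le (m := m))
  rw [Nat.card_prod, Nat.card_eq_fintype_card, Fintype.card_fin] at hcard
  exact Nat.le_of_mul_le_mul_right hcard (Nat.succ_pos _)

theorem stmt_14 (r : ℕ) (hr : 3 ≤ r) (hodd : Odd r) :
    r ≤ ipCover (cycleGraph r □ cycleGraph r) ∧
      ipCover (cycleGraph r □ cycleGraph r) ≤ ipPartition (cycleGraph r □ cycleGraph r) ∧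
      ipPartition (cycleGraph r □ cycleGraph r) ≤ r + 1 :=
  stmt_14_general r hodd
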